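/- Let d be a positive integer, let a, b : Fin d → ℝ be Boolean vectors (each coordinate equal to 0 or 1), and define plane curves π, σ by π_i = (3i, 1 + 2a_i) and σ_i = (3i, 2 − 2b_i) for 1 ≤ i ≤ d. Then the discrete Fréchet distance d_F(π, σ) equals 1 if ⟨a, b⟩ = 0, and equals 3 otherwise. In particular, it is never strictly between 1 and 3, so the embedding is hard even for distinguishing Fréchet distance at most 1 from at least 3. -/

import Mathlib

/-- A traversal of two curves of length `d`: a sequence `f 1, …, f T` of index
pairs in `{1,…,d}²` with `f 1 = (1,1)`, `f T = (d,d)`, where at each step the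
first index advances, the second advances, or both advance together. -/
def IsTraversal (d T : ℕ) (f : ℕ → ℕ × ℕ) : Prop :=
  1 ≤ T ∧ f 1 = (1, 1) ∧ f T = (d, d) ∧
  (∀ t, 1 ≤ t → t ≤ T →
    1 ≤ (f t).1 ∧ (f t).1 ≤ d ∧ 1 ≤ (f t).2 ∧ (f t).2 ≤ d) ∧
  (∀ t, 1 ≤ t → t < T →
    f (t + 1) = ((f t).1 + 1, (f t).2) ∨
    f (t + 1) = ((f t).1, (f t).2 + 1) ∨
    f (t + 1) = ((f t).1 + 1, (f t).2 + 1))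

/-- The discrete Fréchet distance between two curves of length `d` (with
vertices `π 1, …, π d` and `σ 1, …, σ d`): the infimum over all traversals of
the maximum distance `‖π (f t).1 - σ (f t).2‖` along the traversal. -/
noncomputable def discreteFrechetDist (d : ℕ)
    (π σ : ℕ → EuclideanSpace ℝ (Fin 2)) : ℝ :=
  sInf { r | ∃ T f, ∃ hT : 1 ≤ T, IsTraversal d T f ∧
    r = (Finset.Icc 1 T).sup' (Finset.nonempty_Icc.mpr hT)
      (fun t => ‖π (f t).1 - σ (f t).2‖) }

/-!
Consecutive vertices of each curve are `3` apart horizontally, while the vertical gap between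
`π i` and `σ j` is `|2 aᵢ + 2 bⱼ - 1| ∈ {1, 3}`. So every pair of vertices is at distance at
least `1`, pairs with `i ≠ j` are at distance at least `3`, and the diagonal pair `(i, i)` is at
distance `1 + 2 aᵢ bᵢ`. The diagonal traversal therefore has cost `1` or `3` according to whether
`⟨a, b⟩ = 0`. When `aₖ bₖ = 1`, every traversal visits row `k` somewhere, and there it pays at
least `3`, either on the diagonal or off it.
-/

open Finset

theorem exists_mem_Icc_eq_of_le_add_one {g : ℕ → ℕ} {m n k : ℕ} (hmn : m ≤ n)
    (hstep : ∀ t, m ≤ t → t < n → g (t + 1) ≤ g t + 1) (hm : g m ≤ k) (hn : k ≤ g n) :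
    ∃ t ∈ Icc m n, g t = k := by
  induction n, hmn using Nat.le_induction with
  | base => exact ⟨m, by simp, by omega⟩
  | succ n hmn ih =>
    by_cases hk : k ≤ g n
    · obtain ⟨t, ht, hgt⟩ := ih (fun t h1 h2 => hstep t h1 (by omega)) hk
      exact ⟨t, by simp only [mem_Icc] at ht ⊢; omega, hgt⟩
    · have hsucc := hstep n hmn (by omega)
      exact ⟨n + 1, by simp only [mem_Icc]; omega, by omega⟩

theorem exists_fin_add_one_eq_of_mem_Icc {d i : ℕ} (hi : i ∈ Icc 1 d) :
    ∃ k : Fin d, (k : ℕ) + 1 = i := by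
  rw [mem_Icc] at hi
  exact ⟨⟨i - 1, by omega⟩, by simp only; omega⟩

section Traversal

variable {d T : ℕ} {f : ℕ → ℕ × ℕ}

theorem isTraversal_diag (hd : 0 < d) : IsTraversal d d fun t => (t, t) :=
  ⟨hd, rfl, rfl, fun _ h1 h2 => ⟨h1, h2, h1, h2⟩, fun _ _ _ => Or.inr (Or.inr rfl)⟩

theorem IsTraversal.snd_mem (hf : IsTraversal d T f) {t : ℕ} (ht : t ∈ Icc 1 T) :
    (f t).2 ∈ Icc 1 d := by
  rw [mem_Icc] at ht ⊢
  exact (hf.2.2.2.1 t ht.1 ht.2).2.2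

theorem IsTraversal.exists_fst_eq (hf : IsTraversal d T f) {i : ℕ} (hi : i ∈ Icc 1 d) :
    ∃ t ∈ Icc 1 T, (f t).1 = i := by
  obtain ⟨hT, hf1, hfT, -, hstep⟩ := hf
  rw [mem_Icc] at hi
  refine exists_mem_Icc_eq_of_le_add_one hT (fun t h1 h2 => ?_) (by simp [hf1, hi.1])
    (by simp [hfT, hi.2])
  rcases hstep t h1 h2 with h | h | h <;> simp [h]

end Traversal

section FrechetDist

variable {d : ℕ} {π σ : ℕ → EuclideanSpace ℝ (Fin 2)} {c : ℝ}

theorem discreteFrechetDist_eq_of_traversal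
    (hup : ∃ T f, IsTraversal d T f ∧ ∀ t ∈ Icc 1 T, ‖π (f t).1 - σ (f t).2‖ ≤ c)
    (hlow : ∀ T f, IsTraversal d T f → ∃ t ∈ Icc 1 T, c ≤ ‖π (f t).1 - σ (f t).2‖) :
    discreteFrechetDist d π σ = c := by
  refine IsLeast.csInf_eq ⟨?_, ?_⟩
  · obtain ⟨T, f, hf, hle⟩ := hup
    obtain ⟨t, ht, hct⟩ := hlow T f hf
    refine ⟨T, f, hf.1, hf, le_antisymm ?_ (sup'_le _ _ hle)⟩
    exact hct.trans (le_sup' (fun t => ‖π (f t).1 - σ (f t).2‖) ht)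
  · rintro r ⟨T, f, hT, hf, rfl⟩
    obtain ⟨t, ht, hct⟩ := hlow T f hf
    exact hct.trans (le_sup' (fun t => ‖π (f t).1 - σ (f t).2‖) ht)

theorem discreteFrechetDist_eq_of_diag_le_of_le_row (hd : 0 < d)
    (hdiag : ∀ k : Fin d, ‖π (k + 1) - σ (k + 1)‖ ≤ c)
    (hrow : ∃ k : Fin d, ∀ l : Fin d, c ≤ ‖π (k + 1) - σ (l + 1)‖) :
    discreteFrechetDist d π σ = c := by
  refine discreteFrechetDist_eq_of_traversal ⟨d, _, isTraversal_diag hd, fun i hi => ?_⟩ ?_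
  · obtain ⟨k, rfl⟩ := exists_fin_add_one_eq_of_mem_Icc hi
    exact hdiag k
  · intro T f hf
    obtain ⟨k, hrow⟩ := hrow
    obtain ⟨t, ht, hfk⟩ := hf.exists_fst_eq (mem_Icc.2 ⟨by omega, k.isLt⟩)
    obtain ⟨l, hl⟩ := exists_fin_add_one_eq_of_mem_Icc (hf.snd_mem ht)
    exact ⟨t, ht, by rw [hfk, ← hl]; exact hrow l⟩

end FrechetDist

section Embedding

variable {d : ℕ} {a b : Fin d → ℝ} {π σ : ℕ → EuclideanSpace ℝ (Fin 2)}

theorem three_le_norm_sub_embedding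
    (hπ : ∀ k : Fin d, π (k + 1) = ![3 * ((k : ℝ) + 1), 1 + 2 * a k])
    (hσ : ∀ k : Fin d, σ (k + 1) = ![3 * ((k : ℝ) + 1), 2 - 2 * b k]) {k l : Fin d}
    (hkl : k ≠ l) : 3 ≤ ‖π (k + 1) - σ (l + 1)‖ := by
  have hkl' : (k : ℝ) ≠ l := by exact_mod_cast Fin.val_ne_of_ne hkl
  calc (3 : ℝ) ≤ |3 * ((k : ℝ) + 1) - 3 * ((l : ℝ) + 1)| := by
        rw [le_abs]
        rcases hkl'.lt_or_gt with h | h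
        · have : (k : ℝ) + 1 ≤ l := by exact_mod_cast h
          right; linarith
        · have : (l : ℝ) + 1 ≤ k := by exact_mod_cast h
          left; linarith
    _ = ‖(π (k + 1) - σ (l + 1)) 0‖ := by simp [hπ, hσ]
    _ ≤ ‖π (k + 1) - σ (l + 1)‖ := PiLp.norm_apply_le _ 0

theorem one_le_norm_sub_embedding (ha : ∀ i, a i = 0 ∨ a i = 1) (hb : ∀ i, b i = 0 ∨ b i = 1)
    (hπ : ∀ k : Fin d, π (k + 1) = ![3 * ((k : ℝ) + 1), 1 + 2 * a k])
    (hσ : ∀ k : Fin d, σ (k + 1) = ![3 * ((k : ℝ) + 1), 2 - 2 * b k])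
    (k l : Fin d) : 1 ≤ ‖π (k + 1) - σ (l + 1)‖ :=
  calc (1 : ℝ) ≤ |(1 + 2 * a k) - (2 - 2 * b l)| := by
        rcases ha k with h | h <;> rcases hb l with h' | h' <;> norm_num [h, h']
    _ = ‖(π (k + 1) - σ (l + 1)) 1‖ := by simp [hπ, hσ]
    _ ≤ ‖π (k + 1) - σ (l + 1)‖ := PiLp.norm_apply_le _ 1

theorem norm_sub_embedding_self (ha : ∀ i, a i = 0 ∨ a i = 1) (hb : ∀ i, b i = 0 ∨ b i = 1)
    (hπ : ∀ k : Fin d, π (k + 1) = ![3 * ((k : ℝ) + 1), 1 + 2 * a k])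
    (hσ : ∀ k : Fin d, σ (k + 1) = ![3 * ((k : ℝ) + 1), 2 - 2 * b k])
    (k : Fin d) :
    ‖π (k + 1) - σ (k + 1)‖ = 1 + 2 * (a k * b k) := by
  rcases ha k with h | h <;> rcases hb k with h' | h' <;>
    norm_num [EuclideanSpace.norm_eq, hπ, hσ, h, h', Real.sqrt_eq_iff_mul_self_eq]

theorem three_le_norm_sub_embedding_row (ha : ∀ i, a i = 0 ∨ a i = 1) (hb : ∀ i, b i = 0 ∨ b i = 1)
    (hπ : ∀ k : Fin d, π (k + 1) = ![3 * ((k : ℝ) + 1), 1 + 2 * a k])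
    (hσ : ∀ k : Fin d, σ (k + 1) = ![3 * ((k : ℝ) + 1), 2 - 2 * b k])
    {k : Fin d} (hk : a k * b k ≠ 0) (l : Fin d) :
    3 ≤ ‖π (k + 1) - σ (l + 1)‖ := by
  rcases eq_or_ne k l with rfl | hkl
  · have hk1 : a k * b k = 1 := by
      rcases ha k with h | h <;> rcases hb k with h' | h' <;> simp_all
    rw [norm_sub_embedding_self ha hb hπ hσ, hk1]
    norm_num
  · exact three_le_norm_sub_embedding hπ hσ hkl

end Embedding

/-- **The embedded curves have Fréchet distance exactly 1 or exactly 3.**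
For Boolean vectors `a, b : Fin d → ℝ` and the plane curves with vertices
`π i = (3i, 1 + 2 aᵢ)`, `σ i = (3i, 2 - 2 bᵢ)` for `1 ≤ i ≤ d`, the discrete
Fréchet distance equals `1` if `⟨a, b⟩ = 0` and equals `3` otherwise; in
particular it is never strictly between `1` and `3`. -/
theorem frechet_eq_one_or_three (d : ℕ) (hd : 0 < d) (a b : Fin d → ℝ)
    (ha : ∀ i, a i = 0 ∨ a i = 1) (hb : ∀ i, b i = 0 ∨ b i = 1)
    (π σ : ℕ → EuclideanSpace ℝ (Fin 2))
    (hπ : ∀ (i : ℕ) (h1 : 1 ≤ i) (h2 : i ≤ d),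
      π i = ![3 * (i : ℝ), 1 + 2 * a ⟨i - 1, by omega⟩])
    (hσ : ∀ (i : ℕ) (h1 : 1 ≤ i) (h2 : i ≤ d),
      σ i = ![3 * (i : ℝ), 2 - 2 * b ⟨i - 1, by omega⟩]) :
    ((∑ i, a i * b i) = 0 → discreteFrechetDist d π σ = 1) ∧
    ((∑ i, a i * b i) ≠ 0 → discreteFrechetDist d π σ = 3) ∧
    ¬(1 < discreteFrechetDist d π σ ∧ discreteFrechetDist d π σ < 3) := by
  have hπ' : ∀ k : Fin d, π (k + 1) = ![3 * ((k : ℝ) + 1), 1 + 2 * a k] := fun k => by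
    simpa using hπ (k + 1) (by omega) k.isLt
  have hσ' : ∀ k : Fin d, σ (k + 1) = ![3 * ((k : ℝ) + 1), 2 - 2 * b k] := fun k => by
    simpa using hσ (k + 1) (by omega) k.isLt
  have hab : ∀ k, 0 ≤ a k * b k ∧ a k * b k ≤ 1 := fun k => by
    rcases ha k with h | h <;> rcases hb k with h' | h' <;> norm_num [h, h']
  have hone : (∑ i, a i * b i) = 0 → discreteFrechetDist d π σ = 1 := by
    intro h
    rw [sum_eq_zero_iff_of_nonneg fun k _ => (hab k).1] at h
    refine discreteFrechetDist_eq_of_diag_le_of_le_row hd (fun k => ?_)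
      ⟨⟨0, hd⟩, one_le_norm_sub_embedding ha hb hπ' hσ' _⟩
    simp [norm_sub_embedding_self ha hb hπ' hσ', h k]
  have hthree : (∑ i, a i * b i) ≠ 0 → discreteFrechetDist d π σ = 3 := by
    intro h
    obtain ⟨k, -, hk⟩ := exists_ne_zero_of_sum_ne_zero h
    refine discreteFrechetDist_eq_of_diag_le_of_le_row hd (fun l => ?_)
      ⟨k, three_le_norm_sub_embedding_row ha hb hπ' hσ' hk⟩
    rw [norm_sub_embedding_self ha hb hπ' hσ']
    linarith [(hab l).2]
  refine ⟨hone, hthree, ?_⟩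
  by_cases h : ∑ i, a i * b i = 0
  · simp [hone h]
  · norm_num [hthree h]
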